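/- arXiv:1401.7059 — 2 statements merged into one kernel-verified Lean document; each statement's English description precedes it below -/
import Mathlib

section
/- Let X be an ordered Banach space with closed positive cone, T(t) a positive C₀ semigroup on X with generator 𝒜, and z ∈ X⁺. If the equation 𝒜x = −z has a solution x in the domain of 𝒜 with x ∈ X⁺, then for every positive continuous linear functional φ on X, ∫₀^∞ φ(T(t)z) dt ≤ φ(x) < ∞. -/
open Filter MeasureTheory

/-- `InGenerator T x y` means `x` is in the domain of the infinitesimal generator 𝒜 of the
semigroup `T` and `𝒜 x = y`. -/
def InGenerator {X : Type*} [NormedAddCommGroup X] [NormedSpace ℝ X]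
    (T : ℝ → X →L[ℝ] X) (x y : X) : Prop :=
  Tendsto (fun t : ℝ => t⁻¹ • (T t x - x)) (nhdsWithin 0 (Set.Ioi 0)) (nhds y)

theorem lyapunov_solution_implies_weak_L1_bound {X : Type*} [NormedAddCommGroup X]
    [NormedSpace ℝ X] [CompleteSpace X]
    (C : Set X) (hCclosed : IsClosed C)
    (hCadd : ∀ x ∈ C, ∀ y ∈ C, x + y ∈ C)
    (hCsmul : ∀ (c : ℝ), 0 ≤ c → ∀ x ∈ C, c • x ∈ C)
    (hCproper : ∀ x ∈ C, -x ∈ C → x = 0)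
    (T : ℝ → X →L[ℝ] X)
    (hT0 : T 0 = 1)
    (hTadd : ∀ s t : ℝ, 0 ≤ s → 0 ≤ t → T (s + t) = (T s).comp (T t))
    (hTcont : ∀ x : X, ContinuousOn (fun t => T t x) (Set.Ici 0))
    (hTpos : ∀ t : ℝ, 0 ≤ t → ∀ x ∈ C, T t x ∈ C)
    (z : X) (hz : z ∈ C) (x : X) (hx : x ∈ C)
    (hsol : InGenerator T x (-z)) :
    ∀ φ : X →L[ℝ] ℝ, (∀ y ∈ C, 0 ≤ φ y) →
      IntegrableOn (fun t => φ (T t z)) (Set.Ioi 0) volume ∧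
      (∫ t in Set.Ioi (0:ℝ), φ (T t z)) ≤ φ x := by
  intro φ hφ
  set g : ℝ → ℝ := fun t => φ (T t z) with hgdef
  have hgcont : ContinuousOn g (Set.Ici 0) := φ.continuous.comp_continuousOn (hTcont z)
  have hgnn : ∀ t : ℝ, 0 ≤ t → 0 ≤ g t := fun t ht => hφ _ (hTpos t ht z hz)
  -- interval integrability of `g` on `[0, b]` for `b ≥ 0`
  have hgint : ∀ b : ℝ, 0 ≤ b → IntervalIntegrable g volume 0 b := by
    intro b hb
    apply ContinuousOn.intervalIntegrable
    refine hgcont.mono ?_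
    rw [Set.uIcc_of_le hb]
    exact fun u hu => hu.1
  -- right derivative of `u ↦ φ (T u x)` at `t ≥ 0` is `-(g t)`
  have hder : ∀ t : ℝ, 0 ≤ t →
      HasDerivWithinAt (fun u => φ (T u x)) (-(g t)) (Set.Ici t) t := by
    intro t ht
    rw [hasDerivWithinAt_iff_tendsto_slope]
    have hset : Set.Ici t \ {t} = Set.Ioi t := by
      ext u; simp [lt_iff_le_and_ne, and_comm, eq_comm]
    rw [hset]
    -- the main limit, after translation
    have h1 : Tendsto (fun h : ℝ => φ (T t (h⁻¹ • (T h x - x))))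
        (nhdsWithin 0 (Set.Ioi 0)) (nhds (φ (T t (-z)))) :=
      ((φ.continuous.comp (T t).continuous).tendsto _).comp hsol
    have h2 : Tendsto (fun u : ℝ => u - t) (nhdsWithin t (Set.Ioi t))
        (nhdsWithin 0 (Set.Ioi 0)) := by
      apply tendsto_nhdsWithin_of_tendsto_nhds_of_eventually_within
      · have h0 : Tendsto (fun u : ℝ => u - t) (nhds t) (nhds (t - t)) :=
          (continuous_id.sub continuous_const).tendsto t
        rw [sub_self] at h0
        exact h0.mono_left nhdsWithin_le_nhds
      · filter_upwards [self_mem_nhdsWithin] with u hu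
        simpa [Set.mem_Ioi, sub_pos] using hu
    have h3 : Tendsto (fun u : ℝ => φ (T t ((u - t)⁻¹ • (T (u - t) x - x))))
        (nhdsWithin t (Set.Ioi t)) (nhds (φ (T t (-z)))) := h1.comp h2
    have heq : ∀ᶠ u in nhdsWithin t (Set.Ioi t),
        φ (T t ((u - t)⁻¹ • (T (u - t) x - x))) = slope (fun u => φ (T u x)) t u := by
      filter_upwards [self_mem_nhdsWithin] with u hu
      have hut : (0:ℝ) ≤ u - t := le_of_lt (by simpa [sub_pos] using hu)
      have hTu : T u x = T t (T (u - t) x) := by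
        have := hTadd t (u - t) ht hut
        rw [show t + (u - t) = u by ring] at this
        rw [this]; rfl
      rw [slope_def_field, div_eq_inv_mul, hTu]
      rw [(T t).map_smul, (T t).map_sub, φ.map_smul, φ.map_sub]
      simp [smul_eq_mul, mul_sub]
    have := h3.congr' heq
    convert this using 2
    simp [hgdef, map_neg]
  -- the key identity
  have key : ∀ b : ℝ, 0 ≤ b → φ (T b x) + ∫ s in (0:ℝ)..b, g s = φ x := by
    intro b hb
    set f : ℝ → ℝ := fun u => φ (T u x) + ∫ s in (0:ℝ)..u, g s with hfdef
    have hfc : ContinuousOn f (Set.Icc 0 b) := by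
      apply ContinuousOn.add
      · exact φ.continuous.comp_continuousOn
          ((hTcont x).mono (fun u hu => hu.1))
      · have := intervalIntegral.continuousOn_primitive_interval
          (f := g) (a := (0:ℝ)) (b := b) (μ := volume) ?_
        · rwa [Set.uIcc_of_le hb] at this
        · rw [Set.uIcc_of_le hb]
          apply (hgcont.mono (fun u hu => hu.1)).integrableOn_compact isCompact_Icc
    have hfd : ∀ u ∈ Set.Ico 0 b, HasDerivWithinAt f 0 (Set.Ici u) u := by
      intro u hu
      have hd1 := hder u hu.1
      have hd2 : HasDerivWithinAt (fun v => ∫ s in (0:ℝ)..v, g s) (g u) (Set.Ici u) u := by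
        apply intervalIntegral.integral_hasDerivWithinAt_right (hgint u hu.1)
          (t := Set.Ioi u)
        · exact ⟨Set.Ici 0, Filter.mem_of_superset self_mem_nhdsWithin
            (fun v hv => le_of_lt (lt_of_le_of_lt hu.1 hv)),
            hgcont.aestronglyMeasurable measurableSet_Ici⟩
        · exact (hgcont u hu.1).mono (fun v hv => le_of_lt (lt_of_le_of_lt hu.1 hv))
      have h := hd1.add hd2
      rw [neg_add_cancel] at h
      exact h
    have := constant_of_has_deriv_right_zero hfc hfd b (Set.right_mem_Icc.2 hb)
    simp only [hfdef, intervalIntegral.integral_same, hT0] at this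
    simpa using this
  -- bound for interval integrals
  have hbound : ∀ b : ℝ, 0 ≤ b → (∫ s in (0:ℝ)..b, g s) ≤ φ x := by
    intro b hb
    have h := key b hb
    have := hφ _ (hTpos b hb x hx)
    linarith
  -- norm of g equals g on [0, b]
  have hnorm : ∀ b : ℝ, 0 ≤ b → (∫ s in (0:ℝ)..b, ‖g s‖) = ∫ s in (0:ℝ)..b, g s := by
    intro b hb
    apply intervalIntegral.integral_congr
    intro u hu
    rw [Set.uIcc_of_le hb] at hu
    exact Real.norm_of_nonneg (hgnn u hu.1)
  have hInt : IntegrableOn g (Set.Ioi 0) volume := by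
    apply MeasureTheory.integrableOn_Ioi_of_intervalIntegral_norm_bounded
      (φ x) 0 (b := fun i : ℝ => i) (l := atTop) ?_ tendsto_id
    · filter_upwards [eventually_ge_atTop (0:ℝ)] with i hi
      rw [hnorm i hi]
      exact hbound i hi
    · intro i
      rcases le_or_gt 0 i with hi | hi
      · exact (hgint i hi).1
      · rw [Set.Ioc_eq_empty (by exact fun h => absurd (h.trans hi) (lt_irrefl 0))]
        exact integrableOn_empty
  refine ⟨hInt, ?_⟩
  have hlim := MeasureTheory.intervalIntegral_tendsto_integral_Ioi 0 hInt
    (tendsto_id (α := ℝ))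
  apply le_of_tendsto hlim
  filter_upwards [eventually_ge_atTop (0:ℝ)] with i hi
  exact hbound i hi
end

section
/- Let T(t) be a C₀ semigroup on a Banach space X, N a Hilbert space, C : X → N bounded, and suppose (C, A) is continuously finally observable at time t₀ > 0: there is ε > 0 with ∫₀^{t₀} ‖C T(s)x‖² ds ≥ ε ‖T(t₀)x‖² for all x ∈ X. Then for every x ∈ X with ∫₀^∞ ‖C T(t)x‖² dt < ∞, one has ∫₀^∞ ‖T(t)x‖² dt < ∞. -/
open MeasureTheory

/-- Continuous final observability implies `L²` detectability. -/
theorem finally_observable_implies_L2_detectable {X N : Type*}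
    [NormedAddCommGroup X] [NormedSpace ℝ X] [CompleteSpace X]
    [NormedAddCommGroup N] [InnerProductSpace ℝ N] [CompleteSpace N]
    (T : ℝ → X →L[ℝ] X)
    (hT0 : T 0 = 1)
    (hTadd : ∀ s t : ℝ, 0 ≤ s → 0 ≤ t → T (s + t) = (T s).comp (T t))
    (hTcont : ∀ x : X, ContinuousOn (fun t => T t x) (Set.Ici 0))
    (C : X →L[ℝ] N)
    (t₀ : ℝ) (ht₀ : 0 < t₀) (ε : ℝ) (hε : 0 < ε)
    (hobs : ∀ x : X, ε * ‖T t₀ x‖ ^ 2 ≤ ∫ s in (0:ℝ)..t₀, ‖C (T s x)‖ ^ 2) :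
    ∀ x : X, IntegrableOn (fun t => ‖C (T t x)‖ ^ 2) (Set.Ioi 0) volume →
      IntegrableOn (fun t => ‖T t x‖ ^ 2) (Set.Ioi 0) volume := by
  intro x hint
  -- globally continuous versions
  set f : ℝ → ℝ := fun t => ‖T (max t 0) x‖ ^ 2 with hf_def
  set g : ℝ → ℝ := fun t => ‖C (T (max t 0) x)‖ ^ 2 with hg_def
  have hmax : Continuous fun t : ℝ => max t 0 := continuous_id.max continuous_const
  have hmax_mem : ∀ t : ℝ, max t 0 ∈ Set.Ici (0:ℝ) := fun t => le_max_right t 0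
  have hfc : Continuous f := by
    have : Continuous fun t : ℝ => T (max t 0) x :=
      (hTcont x).comp_continuous hmax hmax_mem
    exact (this.norm).pow 2
  have hgc : Continuous g := by
    have : Continuous fun t : ℝ => C (T (max t 0) x) :=
      C.continuous.comp ((hTcont x).comp_continuous hmax hmax_mem)
    exact (this.norm).pow 2
  have hf_eq : ∀ t ∈ Set.Ioi (0:ℝ), f t = ‖T t x‖ ^ 2 := by
    intro t ht; simp only [hf_def, max_eq_left (le_of_lt (Set.mem_Ioi.mp ht))]
  have hg_eq : ∀ t ∈ Set.Ioi (0:ℝ), g t = ‖C (T t x)‖ ^ 2 := by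
    intro t ht; simp only [hg_def, max_eq_left (le_of_lt (Set.mem_Ioi.mp ht))]
  have hf_nonneg : ∀ t, 0 ≤ f t := fun t => sq_nonneg _
  have hg_nonneg : ∀ t, 0 ≤ g t := fun t => sq_nonneg _
  -- g is integrable on Ioi 0
  have hgint : IntegrableOn g (Set.Ioi 0) volume := by
    refine hint.congr_fun ?_ measurableSet_Ioi
    intro t ht; exact (hg_eq t ht).symm
  -- finiteness of the total lintegral of g
  set M : ENNReal := ∫⁻ u in Set.Ioi (0:ℝ), ENNReal.ofReal (g u) with hM_def
  have hM_lt : M < ⊤ := by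
    have := hgint.2
    rw [hasFiniteIntegral_iff_norm] at this
    refine lt_of_le_of_lt (le_of_eq ?_) this
    refine lintegral_congr fun u => ?_
    rw [Real.norm_eq_abs, abs_of_nonneg (hg_nonneg u)]
  -- key pointwise estimate for t > t₀
  have hkey : ∀ t : ℝ, t ∈ Set.Ioi t₀ →
      ENNReal.ofReal (ε * f t) ≤ ∫⁻ s in Set.Ioc (0:ℝ) t₀, ENNReal.ofReal (g (s + (t - t₀))) := by
    intro t ht
    have ht' : t₀ < t := ht
    have htt : (0:ℝ) ≤ t - t₀ := by linarith
    have h1 : ε * f t ≤ ∫ s in (0:ℝ)..t₀, g (s + (t - t₀)) := by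
      have hy := hobs (T (t - t₀) x)
      have e1 : T t₀ (T (t - t₀) x) = T t x := by
        have := hTadd t₀ (t - t₀) (le_of_lt ht₀) htt
        rw [show t₀ + (t - t₀) = t by ring] at this
        rw [this]; rfl
      have e2 : (∫ s in (0:ℝ)..t₀, ‖C (T s (T (t - t₀) x))‖ ^ 2)
          = ∫ s in (0:ℝ)..t₀, g (s + (t - t₀)) := by
        refine intervalIntegral.integral_congr fun s hs => ?_
        rw [Set.uIcc_of_le (le_of_lt ht₀)] at hs
        have hs0 : (0:ℝ) ≤ s := hs.1
        have : T (s + (t - t₀)) = (T s).comp (T (t - t₀)) := hTadd s (t - t₀) hs0 htt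
        have hmx : max (s + (t - t₀)) 0 = s + (t - t₀) := max_eq_left (by linarith)
        simp only [hg_def, hmx, this, ContinuousLinearMap.comp_apply]
      have e3 : f t = ‖T t x‖ ^ 2 := hf_eq t (lt_trans ht₀ ht')
      rw [e3, ← e1]
      calc ε * ‖T t₀ (T (t - t₀) x)‖ ^ 2
          ≤ ∫ s in (0:ℝ)..t₀, ‖C (T s (T (t - t₀) x))‖ ^ 2 := hy
        _ = _ := e2
    -- convert to lintegral
    have hgi : IntegrableOn (fun s => g (s + (t - t₀))) (Set.Ioc 0 t₀) volume :=
      (hgc.comp (continuous_id.add continuous_const)).integrableOn_Ioc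
    calc ENNReal.ofReal (ε * f t)
        ≤ ENNReal.ofReal (∫ s in (0:ℝ)..t₀, g (s + (t - t₀))) := ENNReal.ofReal_le_ofReal h1
      _ = ENNReal.ofReal (∫ s in Set.Ioc (0:ℝ) t₀, g (s + (t - t₀))) := by
          rw [intervalIntegral.integral_of_le (le_of_lt ht₀)]
      _ = ∫⁻ s in Set.Ioc (0:ℝ) t₀, ENNReal.ofReal (g (s + (t - t₀))) := by
          rw [ofReal_integral_eq_lintegral_ofReal hgi
            (Filter.Eventually.of_forall fun s => hg_nonneg _)]
  -- the lintegral of f over Ioi t₀ is finite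
  have hF : (∫⁻ t in Set.Ioi t₀, ENNReal.ofReal (f t)) < ⊤ := by
    have hswap :
        (∫⁻ t in Set.Ioi t₀, ∫⁻ s in Set.Ioc (0:ℝ) t₀, ENNReal.ofReal (g (s + (t - t₀))))
          ≤ ENNReal.ofReal t₀ * M := by
      have hGmeas : Measurable fun p : ℝ × ℝ => ENNReal.ofReal (g (p.2 + (p.1 - t₀))) := by
        apply ENNReal.measurable_ofReal.comp
        exact hgc.measurable.comp (by fun_prop)
      rw [lintegral_lintegral_swap hGmeas.aemeasurable]
      have hinner : ∀ s ∈ Set.Ioc (0:ℝ) t₀,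
          (∫⁻ t in Set.Ioi t₀, ENNReal.ofReal (g (s + (t - t₀)))) ≤ M := by
        intro s hs
        have hmp : MeasurePreserving (fun t : ℝ => t + (s - t₀)) volume volume :=
          measurePreserving_add_right volume (s - t₀)
        have hpre : (fun t : ℝ => t + (s - t₀)) ⁻¹' (Set.Ioi s) = Set.Ioi t₀ := by
          ext t; simp only [Set.mem_preimage, Set.mem_Ioi]; constructor <;> intro h <;> linarith
        have hGm : Measurable fun u : ℝ => ENNReal.ofReal (g u) :=
          ENNReal.measurable_ofReal.comp hgc.measurable
        have := hmp.setLIntegral_comp_preimage (s := Set.Ioi s)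
          measurableSet_Ioi hGm
        rw [hpre] at this
        calc (∫⁻ t in Set.Ioi t₀, ENNReal.ofReal (g (s + (t - t₀))))
            = ∫⁻ t in Set.Ioi t₀, ENNReal.ofReal (g (t + (s - t₀))) := by
              refine lintegral_congr fun t => ?_; ring_nf
          _ = ∫⁻ u in Set.Ioi s, ENNReal.ofReal (g u) := this
          _ ≤ M := lintegral_mono_set (Set.Ioi_subset_Ioi (le_of_lt hs.1))
      calc (∫⁻ s in Set.Ioc (0:ℝ) t₀, ∫⁻ t in Set.Ioi t₀, ENNReal.ofReal (g (s + (t - t₀))))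
          ≤ ∫⁻ _ in Set.Ioc (0:ℝ) t₀, M := setLIntegral_mono_ae (by fun_prop)
            (Filter.Eventually.of_forall hinner)
        _ = ENNReal.ofReal t₀ * M := by
            rw [setLIntegral_const, Real.volume_Ioc, sub_zero, mul_comm]
    have h2 : (∫⁻ t in Set.Ioi t₀, ENNReal.ofReal (ε * f t)) ≤ ENNReal.ofReal t₀ * M :=
      le_trans (setLIntegral_mono' measurableSet_Ioi hkey) hswap
    have h3 : (∫⁻ t in Set.Ioi t₀, ENNReal.ofReal (ε * f t))
        = ENNReal.ofReal ε * ∫⁻ t in Set.Ioi t₀, ENNReal.ofReal (f t) := by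
      rw [← lintegral_const_mul _ (by fun_prop)]
      exact lintegral_congr fun t => ENNReal.ofReal_mul (le_of_lt hε)
    rw [h3] at h2
    have hεne : ENNReal.ofReal ε ≠ 0 := by
      simp [ENNReal.ofReal_eq_zero, not_le, hε]
    by_contra hcon
    push_neg at hcon
    rw [top_le_iff.mp hcon, ENNReal.mul_top hεne] at h2
    exact (lt_irrefl ⊤ (lt_of_le_of_lt h2 (ENNReal.mul_lt_top ENNReal.ofReal_lt_top hM_lt)))
  -- assemble
  have hf_int : IntegrableOn f (Set.Ioi 0) volume := by
    have hsplit : Set.Ioi (0:ℝ) = Set.Ioc 0 t₀ ∪ Set.Ioi t₀ := by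
      rw [Set.Ioc_union_Ioi_eq_Ioi (le_of_lt ht₀)]
    rw [hsplit]
    refine IntegrableOn.union ?_ ?_
    · exact hfc.integrableOn_Ioc
    · refine ⟨hfc.aestronglyMeasurable.restrict, ?_⟩
      rw [hasFiniteIntegral_iff_norm]
      refine lt_of_le_of_lt (le_of_eq ?_) hF
      refine lintegral_congr fun t => ?_
      rw [Real.norm_eq_abs, abs_of_nonneg (hf_nonneg t)]
  refine hf_int.congr_fun ?_ measurableSet_Ioi
  exact hf_eq
end
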